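/- If (Z^{(n)}) is a sequence in E_V converging to M ∈ E_V and dim_ℂ Hom(Z^{(n)}, M) = dim_ℂ Hom(M, M) for all n, then for all sufficiently large n the representation Z^{(n)} is isomorphic to M, i.e. there exists f ∈ Hom(Z^{(n)}, M) with every component f_i invertible. (In the paper this is proved by choosing ξ_n ∈ Hom(Z^{(n)}, M) converging to the identity of Hom(M, M), so that ξ_n is invertible for large n.) -/

import Mathlib

open Filter

/-- The space of intertwiners `Hom(B, C)` between two representations (given in matrix
form) of a quiver with vertices `I`, arrows `Ω`, and source/target maps `s`, `t`,
both on the same family of vector spaces of dimensions `d`. -/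
noncomputable def homSpace {I Ω : Type*} [Fintype I] [Fintype Ω] (s t : Ω → I) (d : I → ℕ)
    (B C : ∀ h : Ω, Matrix (Fin (d (t h))) (Fin (d (s h))) ℂ) :
    Submodule ℂ (∀ i : I, Matrix (Fin (d i)) (Fin (d i)) ℂ) where
  carrier := {f | ∀ h : Ω, f (t h) * B h = C h * f (s h)}
  add_mem' := by
    intro a b ha hb h
    simp only [Pi.add_apply, Matrix.add_mul, Matrix.mul_add, ha h, hb h]
  zero_mem' := by
    intro h
    simp
  smul_mem' := by
    intro c f hf h
    simp only [Pi.smul_apply, Matrix.smul_mul, Matrix.mul_smul, hf h]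

open Topology Module

/-!
`Hom(B, M)` is the kernel of the linear map `f ↦ (f_{t h} B_h - M_h f_{s h})_h`, which depends
continuously on `B`. If linear maps `T n → T₀` have kernels of constant dimension, every
`x ∈ ker T₀` is a limit of points of `ker (T n)`: take a complement `W` of `ker T₀` and a left
inverse `L` of `T₀` on `W`; then `L ∘ T n` restricted to `W` tends to the identity, so for large
`n` it is invertible, `W` is then a complement of `ker (T n)`, and the `W`-component of `x` along
`ker (T n)` tends to `0`. Applied to `x = 1` this yields intertwiners `ξ n ∈ Hom(Z n, M)` tending
to the identity, and invertibility is an open condition.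
-/

lemma LinearMap.map_sub_eq_zero_of_injective_comp {K V V' : Type*} [Field K]
    [AddCommGroup V] [Module K V] [FiniteDimensional K V] [AddCommGroup V'] [Module K V']
    {T : V →ₗ[K] V'} {W : Submodule K V} {L : V' →ₗ[K] W}
    (hA : Function.Injective (L ∘ₗ T ∘ₗ W.subtype))
    (hdim : finrank K V ≤ finrank K W + finrank K (LinearMap.ker T))
    {x : V} {w : W} (hw : L (T w) = L (T x)) : T (x - w) = 0 := by
  have hdisj : Disjoint W (LinearMap.ker T) := by
    refine Submodule.disjoint_def.2 fun v hv hTv => ?_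
    have : (L ∘ₗ T ∘ₗ W.subtype) ⟨v, hv⟩ = (L ∘ₗ T ∘ₗ W.subtype) 0 := by
      simp [LinearMap.mem_ker.1 hTv]
    simpa using hA this
  obtain ⟨v, hv, k, hk, rfl⟩ := Submodule.mem_sup.1
    (((Submodule.isCompl_iff_disjoint _ _ hdim).2 hdisj).sup_eq_top ▸ Submodule.mem_top (x := x))
  have hTk : T k = 0 := LinearMap.mem_ker.1 hk
  have hvw : (⟨v, hv⟩ : W) = w := hA (by simp [hw, hTk])
  simp [← hvw, hTk]

lemma Filter.Tendsto.ringInverse_apply {𝕜 E ι : Type*} [NontriviallyNormedField 𝕜]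
    [NormedAddCommGroup E] [NormedSpace 𝕜 E] [CompleteSpace E] {l : Filter ι}
    {A : ι → E →L[𝕜] E} {A₀ : (E →L[𝕜] E)ˣ} {y : ι → E} {y₀ : E}
    (hA : Tendsto A l (𝓝 A₀)) (hy : Tendsto y l (𝓝 y₀)) :
    Tendsto (fun n => Ring.inverse (A n) (y n)) l
      (𝓝 ((↑A₀⁻¹ : E →L[𝕜] E) y₀)) := by
  have hinv : Tendsto (fun n => Ring.inverse (A n)) l (𝓝 (↑A₀⁻¹ : E →L[𝕜] E)) := by
    simpa [Function.comp_def] using (NormedRing.inverse_continuousAt A₀).tendsto.comp hA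
  simpa [Function.comp_def] using
    (isBoundedBilinearMap_apply.continuous.tendsto _).comp (hinv.prodMk_nhds hy)

theorem exists_mem_ker_tendsto_of_finrank_ker_eq {𝕜 E F ι : Type*}
    [NontriviallyNormedField 𝕜] [CompleteSpace 𝕜]
    [NormedAddCommGroup E] [NormedSpace 𝕜 E] [FiniteDimensional 𝕜 E]
    [NormedAddCommGroup F] [NormedSpace 𝕜 F] [FiniteDimensional 𝕜 F]
    {l : Filter ι} {T : ι → E →L[𝕜] F} {T₀ : E →L[𝕜] F} (hT : Tendsto T l (𝓝 T₀))
    (hk : ∀ᶠ n in l, finrank 𝕜 (LinearMap.ker (T n : E →ₗ[𝕜] F)) =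
      finrank 𝕜 (LinearMap.ker (T₀ : E →ₗ[𝕜] F)))
    {x : E} (hx : T₀ x = 0) :
    ∃ y : ι → E, (∀ᶠ n in l, T n (y n) = 0) ∧ Tendsto y l (𝓝 x) := by
  obtain ⟨W, hW⟩ := (LinearMap.ker (T₀ : E →ₗ[𝕜] F)).exists_isCompl
  have : CompleteSpace W := FiniteDimensional.complete 𝕜 W
  have hinj : Function.Injective (T₀ ∘L W.subtypeL) := by
    refine (injective_iff_map_eq_zero _).2 fun w hw => ?_
    simpa using Submodule.disjoint_def.1 hW.disjoint w hw w.2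
  obtain ⟨L, hL⟩ := ContinuousLinearMap.HasLeftInverse.of_injective_of_finiteDimensional hinj
  set A : ι → W →L[𝕜] W := fun n => L ∘L T n ∘L W.subtypeL
  have hA : Tendsto A l (𝓝 1) := by
    rw [← (ContinuousLinearMap.ext hL : L ∘L T₀ ∘L W.subtypeL = 1)]
    exact ((continuous_const.clm_comp (continuous_id.clm_comp continuous_const)).tendsto T₀).comp
      hT
  have hunit : ∀ᶠ n in l, IsUnit (A n) := hA.eventually (Units.isOpen.mem_nhds isUnit_one)
  refine ⟨fun n => x - Ring.inverse (A n) (L (T n x)), ?_, ?_⟩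
  · filter_upwards [hunit, hk] with n hAn hkn
    have hAn_inj : Function.Injective (A n) :=
      hAn.unit_spec ▸ (ContinuousLinearEquiv.unitsEquiv 𝕜 W hAn.unit).injective
    refine LinearMap.map_sub_eq_zero_of_injective_comp (L := L) hAn_inj ?_ ?_
    · rw [hkn, add_comm, Submodule.finrank_add_eq_of_isCompl hW]
    · exact congr($(Ring.mul_inverse_cancel _ hAn) (L (T n x)))
  · have hLT : Tendsto (fun n => L (T n x)) l (𝓝 0) := by
      simpa [hx, Function.comp_def] using (L.continuous.tendsto _).comp
        (((ContinuousLinearMap.apply 𝕜 F x).continuous.tendsto _).comp hT)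
    have hw : Tendsto (fun n => Ring.inverse (A n) (L (T n x))) l (𝓝 0) := by
      simpa using (Units.val_one (α := W →L[𝕜] W) ▸ hA).ringInverse_apply hLT
    simpa using tendsto_const_nhds.sub ((continuous_subtype_val.tendsto 0).comp hw)

lemma isOpen_setOf_forall_isUnit {K I : Type*} [Field K] [TopologicalSpace K]
    [IsTopologicalRing K] [T1Space K] [Finite I] {n : I → Type*} [∀ i, Fintype (n i)]
    [∀ i, DecidableEq (n i)] :
    IsOpen {f : ∀ i, Matrix (n i) (n i) K | ∀ i, IsUnit (f i)} := by
  simp only [Matrix.isUnit_iff_isUnit_det, isUnit_iff_ne_zero, Set.ofPred_forall]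
  exact isOpen_iInter_of_finite fun i => isOpen_ne.preimage (continuous_apply i).matrix_det

section Intertwiners

variable {I Ω : Type*} [Fintype I] [Fintype Ω] (s t : Ω → I) (d : I → ℕ)

noncomputable def intertwinerDefect (B C : ∀ h : Ω, Matrix (Fin (d (t h))) (Fin (d (s h))) ℂ) :
    (∀ i : I, Matrix (Fin (d i)) (Fin (d i)) ℂ) →L[ℂ]
      (∀ h : Ω, Matrix (Fin (d (t h))) (Fin (d (s h))) ℂ) where
  toFun f h := f (t h) * B h - C h * f (s h)
  map_add' f g := by
    ext1 h
    simp only [Pi.add_apply, Matrix.add_mul, Matrix.mul_add]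
    abel
  map_smul' c f := by
    ext1 h
    simp only [Pi.smul_apply, Matrix.smul_mul, Matrix.mul_smul, RingHom.id_apply, smul_sub]
  cont := continuous_pi fun h =>
    ((continuous_apply _).matrix_mul continuous_const).sub
      (continuous_const.matrix_mul (continuous_apply _))

variable {s t d}

lemma ker_intertwinerDefect (B C : ∀ h : Ω, Matrix (Fin (d (t h))) (Fin (d (s h))) ℂ) :
    LinearMap.ker (intertwinerDefect s t d B C).toLinearMap = homSpace s t d B C := by
  ext f
  simp [intertwinerDefect, homSpace, funext_iff, sub_eq_zero]

-- Matrices carry no global norm; the entrywise sup norm induces the product topology.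
attribute [local instance] Matrix.normedAddCommGroup Matrix.normedSpace

lemma continuous_intertwinerDefect (C : ∀ h : Ω, Matrix (Fin (d (t h))) (Fin (d (s h))) ℂ) :
    Continuous fun B => intertwinerDefect s t d B C :=
  continuous_clm_apply.2 fun _ => continuous_pi fun h =>
    (continuous_const.matrix_mul (continuous_apply h)).sub continuous_const

theorem exists_mem_homSpace_tendsto_one
    {Z : ℕ → ∀ h : Ω, Matrix (Fin (d (t h))) (Fin (d (s h))) ℂ}
    {M : ∀ h : Ω, Matrix (Fin (d (t h))) (Fin (d (s h))) ℂ} (hZ : Tendsto Z atTop (𝓝 M))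
    (hdim : ∀ n, finrank ℂ (homSpace s t d (Z n) M) = finrank ℂ (homSpace s t d M M)) :
    ∃ ξ : ℕ → ∀ i : I, Matrix (Fin (d i)) (Fin (d i)) ℂ,
      (∀ᶠ n in atTop, ξ n ∈ homSpace s t d (Z n) M) ∧ Tendsto ξ atTop (𝓝 1) := by
  have hone : intertwinerDefect s t d M M 1 = 0 := by
    ext1 h
    simp [intertwinerDefect]
  have hk : ∀ n, finrank ℂ (LinearMap.ker (intertwinerDefect s t d (Z n) M).toLinearMap) =
      finrank ℂ (LinearMap.ker (intertwinerDefect s t d M M).toLinearMap) := fun n => by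
    rw [ker_intertwinerDefect, ker_intertwinerDefect]
    exact hdim n
  obtain ⟨ξ, hξ_ker, hξ_lim⟩ := exists_mem_ker_tendsto_of_finrank_ker_eq
    ((continuous_intertwinerDefect M).tendsto M |>.comp hZ) (.of_forall hk) hone
  exact ⟨ξ, hξ_ker.mono fun n hn => ker_intertwinerDefect (Z n) M ▸ hn, hξ_lim⟩

end Intertwiners

/-- if `Z n → M` and `dim Hom(Z n, M) = dim Hom(M, M)` for all `n`, then
for all sufficiently large `n` the representation `Z n` is isomorphic to `M`. -/
theorem eventually_iso_of_finrank_hom_eq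
    {I Ω : Type*} [Fintype I] [Fintype Ω] (s t : Ω → I) (d : I → ℕ)
    (Z : ℕ → ∀ h : Ω, Matrix (Fin (d (t h))) (Fin (d (s h))) ℂ)
    (M : ∀ h : Ω, Matrix (Fin (d (t h))) (Fin (d (s h))) ℂ)
    (hZ : Tendsto Z atTop (nhds M))
    (hdim : ∀ n, Module.finrank ℂ (homSpace s t d (Z n) M) =
      Module.finrank ℂ (homSpace s t d M M)) :
    ∀ᶠ n in atTop, ∃ f ∈ homSpace s t d (Z n) M, ∀ i : I, IsUnit (f i) := by
  obtain ⟨ξ, hξ_hom, hξ_lim⟩ := exists_mem_homSpace_tendsto_one hZ hdim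
  filter_upwards [hξ_hom, hξ_lim (isOpen_setOf_forall_isUnit.mem_nhds fun _ => isUnit_one)]
    with n hn hunit
  exact ⟨ξ n, hn, hunit⟩
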